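/- Let E and F be GTESs over a signature Σ. Then R⟨E,F⟩ and R⟨F,E⟩ together simulate R⟨E∪F,∅⟩ if and only if for every constant a ∈ C⟨E∪F,∅⟩ at least one of the following two conditions holds: (1) a ∈ C⟨E,F⟩ and for every b ∈ C⟨E∪F,∅⟩, if there is a path of positive length or a cycle from a to b in AUX[E;F] then R⟨E,F⟩ keeps up with R⟨E∪F,∅⟩ writing b; (2) a ∈ C⟨F,E⟩ and for every b ∈ C⟨E∪F,∅⟩, if there is a path of positive length or a cycle from a to b in AUX[E;F] then R⟨F,E⟩ keeps up with R⟨E∪F,∅⟩ writing b. -/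

import Mathlib

inductive GTerm (S : Type) (ar : S → ℕ) : Type
  | node (σ : S) (args : Fin (ar σ) → GTerm S ar) : GTerm S ar

/-- The congruence on the ground term algebra generated by a set of equations `E`:
the smallest equivalence relation containing `E` and compatible with all operations. -/
inductive EqCong {S : Type} {ar : S → ℕ} (E : Set (GTerm S ar × GTerm S ar)) :
    GTerm S ar → GTerm S ar → Prop
  | base {s t : GTerm S ar} : (s, t) ∈ E → EqCong E s t
  | refl (t : GTerm S ar) : EqCong E t t
  | symm {s t : GTerm S ar} : EqCong E s t → EqCong E t s
  | trans {s t u : GTerm S ar} : EqCong E s t → EqCong E t u → EqCong E s u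
  | lift {σ : S} {f g : Fin (ar σ) → GTerm S ar} :
      (∀ i, EqCong E (f i) (g i)) → EqCong E (GTerm.node σ f) (GTerm.node σ g)

/-- A congruence on the ground term algebra: an equivalence relation compatible
with all operations. -/
def IsTermCongruence {S : Type} {ar : S → ℕ} (r : GTerm S ar → GTerm S ar → Prop) : Prop :=
  Equivalence r ∧
    ∀ (σ : S) (f g : Fin (ar σ) → GTerm S ar),
      (∀ i, r (f i) (g i)) → r (GTerm.node σ f) (GTerm.node σ g)

/-- `Subterm s t` : `s` is a subterm of `t`. -/
inductive Subterm {S : Type} {ar : S → ℕ} : GTerm S ar → GTerm S ar → Prop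
  | refl (t : GTerm S ar) : Subterm t t
  | node {s : GTerm S ar} {σ : S} {f : Fin (ar σ) → GTerm S ar} (i : Fin (ar σ)) :
      Subterm s (f i) → Subterm s (GTerm.node σ f)

/-- `ST E` : the set of all subterms of sides of equations of `E`. -/
def STSet {S : Type} {ar : S → ℕ} (E : Set (GTerm S ar × GTerm S ar)) : Set (GTerm S ar) :=
  {t | ∃ p ∈ E, Subterm t p.1 ∨ Subterm t p.2}

/-- The `Θ⟨G⟩`-class of `t` inside `W`. -/
def thCls {S : Type} {ar : S → ℕ} (G : Set (GTerm S ar × GTerm S ar))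
    (W : Set (GTerm S ar)) (t : GTerm S ar) : Set (GTerm S ar) :=
  {u | u ∈ W ∧ EqCong G t u}

/-- `Θ⟨G⟩` as a set of pairs: the restriction of the generated congruence to `W × W`. -/
def Theta {S : Type} {ar : S → ℕ} (G : Set (GTerm S ar × GTerm S ar))
    (W : Set (GTerm S ar)) : Set (GTerm S ar × GTerm S ar) :=
  {p | p.1 ∈ W ∧ p.2 ∈ W ∧ EqCong G p.1 p.2}

/-- `C⟨G⟩` : the set of `Θ⟨G⟩`-classes of elements of `W`, viewed as new constants. -/
def CCl {S : Type} {ar : S → ℕ} (G : Set (GTerm S ar × GTerm S ar))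
    (W : Set (GTerm S ar)) : Set (Set (GTerm S ar)) :=
  {A | ∃ t ∈ W, A = thCls G W t}

/-- Terms over the signature extended with a type `C` of new constants. -/
inductive XTerm (S : Type) (ar : S → ℕ) (C : Type) : Type
  | const (c : C) : XTerm S ar C
  | node (σ : S) (args : Fin (ar σ) → XTerm S ar C) : XTerm S ar C

abbrev XRule (S : Type) (ar : S → ℕ) (C : Type) : Type :=
  XTerm S ar C × XTerm S ar C

/-- Embedding of ground terms over `Σ` into the extended terms. -/
def GTerm.toX {S : Type} {ar : S → ℕ} {C : Type} : GTerm S ar → XTerm S ar C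
  | .node σ f => .node σ (fun i => (f i).toX)

/-- The GTRS `R⟨G⟩` (relative to the subterm set `W`): its rules are exactly
`σ(t₁/Θ⟨G⟩, …, t_m/Θ⟨G⟩) → σ(t₁,…,t_m)/Θ⟨G⟩` for `σ(t₁,…,t_m) ∈ W`. -/
def RRsys {S : Type} {ar : S → ℕ} (G : Set (GTerm S ar × GTerm S ar))
    (W : Set (GTerm S ar)) : Set (XRule S ar (Set (GTerm S ar))) :=
  {r | ∃ (σ : S) (ts : Fin (ar σ) → GTerm S ar),
      GTerm.node σ ts ∈ W ∧
      r = (XTerm.node σ (fun i => XTerm.const (thCls G W (ts i))),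
           XTerm.const (thCls G W (GTerm.node σ ts)))}

/-- One-step rewriting by a GTRS `R`. -/
inductive Rew {S : Type} {ar : S → ℕ} {C : Type} (R : Set (XRule S ar C)) :
    XTerm S ar C → XTerm S ar C → Prop
  | rule {l r : XTerm S ar C} : (l, r) ∈ R → Rew R l r
  | node {σ : S} {f g : Fin (ar σ) → XTerm S ar C} (i : Fin (ar σ)) :
      Rew R (f i) (g i) → (∀ j, j ≠ i → f j = g j) →
      Rew R (XTerm.node σ f) (XTerm.node σ g)

/-- `→*_R` : reflexive–transitive closure of one-step rewriting. -/
def RewStar {S : Type} {ar : S → ℕ} {C : Type} (R : Set (XRule S ar C)) :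
    XTerm S ar C → XTerm S ar C → Prop :=
  Relation.ReflTransGen (Rew R)

/-- A GTRS is total (w.r.t. a set `Cst` of constants) if every `σ(a₁,…,a_m)` with
`a₁,…,a_m ∈ Cst` is the left-hand side of some rule. -/
def TotalR {S : Type} {ar : S → ℕ} (R : Set (XRule S ar (Set (GTerm S ar))))
    (Cst : Set (Set (GTerm S ar))) : Prop :=
  ∀ (σ : S) (av : Fin (ar σ) → Set (GTerm S ar)), (∀ i, av i ∈ Cst) →
    ∃ rhs, (XTerm.node σ (fun i => XTerm.const (av i)), rhs) ∈ R

/-- An extended term containing no new constants, i.e. a ground term over `Σ`. -/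
def IsGroundX {S : Type} {ar : S → ℕ} {C : Type} (t : XTerm S ar C) : Prop :=
  ∃ s : GTerm S ar, GTerm.toX s = t

/-- `ProperExt b t` : `t = δ[b]` for some one-hole context `δ` over `Σ`
different from the hole itself. -/
inductive ProperExt {S : Type} {ar : S → ℕ} {C : Type} (b : XTerm S ar C) :
    XTerm S ar C → Prop
  | base {σ : S} {f : Fin (ar σ) → XTerm S ar C} (i : Fin (ar σ)) :
      f i = b → (∀ j, j ≠ i → IsGroundX (f j)) → ProperExt b (XTerm.node σ f)
  | step {σ : S} {f : Fin (ar σ) → XTerm S ar C} (i : Fin (ar σ)) :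
      ProperExt b (f i) → (∀ j, j ≠ i → IsGroundX (f j)) → ProperExt b (XTerm.node σ f)

/-- `R` reaches the constant `a` from a proper extension of the constant `b`. -/
def ReachesPE {S : Type} {ar : S → ℕ} (R : Set (XRule S ar (Set (GTerm S ar))))
    (a b : Set (GTerm S ar)) : Prop :=
  ∃ t, ProperExt (XTerm.const b) t ∧ RewStar R t (XTerm.const a)

/-- The arc relation `A[E;F]` of the auxiliary directed graph: `(a,b)` is an arc iff some
rule `σ(a₁,…,a_m) → a` of `R` has `b = aᵢ` for some `i`. -/
def AuxArc {S : Type} {ar : S → ℕ} (R : Set (XRule S ar (Set (GTerm S ar))))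
    (a b : Set (GTerm S ar)) : Prop :=
  ∃ (σ : S) (av : Fin (ar σ) → Set (GTerm S ar)) (i : Fin (ar σ)),
    (XTerm.node σ (fun j => XTerm.const (av j)), XTerm.const a) ∈ R ∧ av i = b

/-- `R1` keeps up with `Rall` writing the constant `a`. -/
def KeepsUp {S : Type} {ar : S → ℕ}
    (R1 Rall : Set (XRule S ar (Set (GTerm S ar))))
    (C1 : Set (Set (GTerm S ar))) (a : Set (GTerm S ar)) : Prop :=
  ∀ (σ : S) (av : Fin (ar σ) → Set (GTerm S ar)),
    (XTerm.node σ (fun i => XTerm.const (av i)), XTerm.const a) ∈ Rall →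
    ∀ bv : Fin (ar σ) → Set (GTerm S ar),
      (∀ i, bv i ∈ C1) → (∀ i, bv i ⊆ av i) →
      ∃ rhs, (XTerm.node σ (fun i => XTerm.const (bv i)), rhs) ∈ R1

/-- `R1` (with constant set `C1`) simulates `Rall` (with constant set `Call`) on `a`. -/
def SimulatesOn {S : Type} {ar : S → ℕ}
    (R1 Rall : Set (XRule S ar (Set (GTerm S ar))))
    (C1 Call : Set (Set (GTerm S ar))) (a : Set (GTerm S ar)) : Prop :=
  a ∈ C1 ∧ ∀ b ∈ Call, ReachesPE Rall a b → KeepsUp R1 Rall C1 b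

/-- `R⟨E,F⟩` and `R⟨F,E⟩` together simulate `R⟨E∪F,∅⟩`. -/
def TogetherSim {S : Type} {ar : S → ℕ}
    (E F : Set (GTerm S ar × GTerm S ar)) : Prop :=
  ∀ a ∈ CCl (E ∪ F) (STSet (E ∪ F)),
    SimulatesOn (RRsys E (STSet (E ∪ F))) (RRsys (E ∪ F) (STSet (E ∪ F)))
      (CCl E (STSet (E ∪ F))) (CCl (E ∪ F) (STSet (E ∪ F))) a ∨
    SimulatesOn (RRsys F (STSet (E ∪ F))) (RRsys (E ∪ F) (STSet (E ∪ F)))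
      (CCl F (STSet (E ∪ F))) (CCl (E ∪ F) (STSet (E ∪ F))) a

/-!
Reaching `a` from a proper extension of `b` is the same as a path of positive length from `a`
to `b` in `AUX[E;F]`, so the two conditions coincide. A rule `σ(a₁,…,a_m) → a'` replaces
occurrences of the `aᵢ` by `a'`, and each `(a', aᵢ)` is an arc; hence along a reduction of
`δ[b]` to `a` every constant present is reachable from `a`, and `b`, which starts strictly below
the root, by a path of positive length. Conversely a path `a = c₀ → ⋯ → c_k = b` is realized by
nesting the rules behind its arcs and filling the other argument positions with terms `t ∈ W`,
which reduce to their classes `t/Θ` because `W` is closed under subterms.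
-/

section Reachability

variable {S : Type} {ar : S → ℕ} {C : Type}

inductive XTerm.Occurs (c : C) : XTerm S ar C → Prop
  | const : XTerm.Occurs c (XTerm.const c)
  | node {σ : S} {f : Fin (ar σ) → XTerm S ar C} (i : Fin (ar σ)) :
      XTerm.Occurs c (f i) → XTerm.Occurs c (XTerm.node σ f)

inductive XTerm.OccursBelowRoot (c : C) : XTerm S ar C → Prop
  | node {σ : S} {f : Fin (ar σ) → XTerm S ar C} (i : Fin (ar σ)) :
      XTerm.Occurs c (f i) → XTerm.OccursBelowRoot c (XTerm.node σ f)

theorem XTerm.OccursBelowRoot.occurs {c : C} {t : XTerm S ar C} (h : t.OccursBelowRoot c) :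
    t.Occurs c := by
  cases h with
  | node i h => exact .node i h

theorem ProperExt.occursBelowRoot {b : C} {t : XTerm S ar C}
    (h : ProperExt (XTerm.const b) t) : t.OccursBelowRoot b := by
  induction h with
  | base i hfi _ => exact .node i (hfi ▸ .const)
  | step i _ _ ih => exact .node i ih.occurs

def FlatRules (R : Set (XRule S ar C)) : Prop :=
  ∀ l r, (l, r) ∈ R → ∃ (σ : S) (av : Fin (ar σ) → C) (c : C),
    l = XTerm.node σ (fun j => XTerm.const (av j)) ∧ r = XTerm.const c

theorem flatRules_RRsys (G : Set (GTerm S ar × GTerm S ar)) (W : Set (GTerm S ar)) :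
    FlatRules (RRsys G W) := by
  rintro l r ⟨σ, ts, -, h⟩
  rw [Prod.ext_iff] at h
  exact ⟨σ, fun i => thCls G W (ts i), thCls G W (GTerm.node σ ts), h.1, h.2⟩

variable {R : Set (XRule S ar (Set (GTerm S ar)))}

theorem FlatRules.occurs_of_rew (hR : FlatRules R) {s s' : XTerm S ar (Set (GTerm S ar))}
    (hs : Rew R s s') {b : Set (GTerm S ar)} (hb : s.Occurs b) :
    s'.Occurs b ∨ ∃ c, AuxArc R c b ∧ s'.Occurs c := by
  induction hs generalizing b with
  | rule hmem =>
    obtain ⟨σ, av, c, rfl, rfl⟩ := hR _ _ hmem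
    rcases hb with _ | ⟨i, ⟨⟩⟩
    exact .inr ⟨c, ⟨σ, av, i, hmem, rfl⟩, .const⟩
  | @node σ f g k _ hfg ih =>
    rcases hb with _ | ⟨i, hb⟩
    by_cases hik : i = k
    · subst hik
      rcases ih hb with hb' | ⟨c, harc, hc⟩
      · exact .inl (.node i hb')
      · exact .inr ⟨c, harc, .node i hc⟩
    · exact .inl (.node i (hfg i hik ▸ hb))

theorem FlatRules.occursBelowRoot_of_rew (hR : FlatRules R)
    {s s' : XTerm S ar (Set (GTerm S ar))} (hs : Rew R s s') {b : Set (GTerm S ar)}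
    (hb : s.OccursBelowRoot b) :
    s'.OccursBelowRoot b ∨ ∃ c, AuxArc R c b ∧ s'.Occurs c := by
  cases hs with
  | rule hmem =>
    obtain ⟨σ, av, c, rfl, rfl⟩ := hR _ _ hmem
    rcases hb with ⟨i, ⟨⟩⟩
    exact .inr ⟨c, ⟨σ, av, i, hmem, rfl⟩, .const⟩
  | node k hk hfg =>
    rcases hb with ⟨i, hb⟩
    by_cases hik : i = k
    · subst hik
      rcases hR.occurs_of_rew hk hb with hb' | ⟨c, harc, hc⟩
      · exact .inl (.node i hb')
      · exact .inr ⟨c, harc, .node i hc⟩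
    · exact .inl (.node i (hfg i hik ▸ hb))

theorem FlatRules.reflTransGen_auxArc_of_occurs (hR : FlatRules R)
    {t : XTerm S ar (Set (GTerm S ar))} {a : Set (GTerm S ar)}
    (ht : RewStar R t (XTerm.const a)) {b : Set (GTerm S ar)} (hb : t.Occurs b) :
    Relation.ReflTransGen (AuxArc R) a b := by
  induction ht using Relation.ReflTransGen.head_induction_on generalizing b with
  | refl =>
    cases hb
    exact .refl
  | head hstep _ ih =>
    rcases hR.occurs_of_rew hstep hb with hb' | ⟨c, harc, hc⟩
    · exact ih hb'
    · exact (ih hc).tail harc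

theorem FlatRules.transGen_auxArc_of_occursBelowRoot (hR : FlatRules R)
    {t : XTerm S ar (Set (GTerm S ar))} {a : Set (GTerm S ar)}
    (ht : RewStar R t (XTerm.const a)) {b : Set (GTerm S ar)} (hb : t.OccursBelowRoot b) :
    Relation.TransGen (AuxArc R) a b := by
  induction ht using Relation.ReflTransGen.head_induction_on generalizing b with
  | refl => cases hb
  | head hstep hrest ih =>
    rcases hR.occursBelowRoot_of_rew hstep hb with hb' | ⟨c, harc, hc⟩
    · exact ih hb'
    · exact .tail' (hR.reflTransGen_auxArc_of_occurs hrest hc) harc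

theorem FlatRules.transGen_auxArc_of_reachesPE (hR : FlatRules R) {a b : Set (GTerm S ar)}
    (h : ReachesPE R a b) : Relation.TransGen (AuxArc R) a b := by
  obtain ⟨t, hext, ht⟩ := h
  exact hR.transGen_auxArc_of_occursBelowRoot ht hext.occursBelowRoot

end Reachability

section Congruence

variable {S : Type} {ar : S → ℕ} {C : Type} {R : Set (XRule S ar C)} {σ : S}

theorem rewStar_node_update [DecidableEq (Fin (ar σ))] (f : Fin (ar σ) → XTerm S ar C)
    (i : Fin (ar σ)) {s s' : XTerm S ar C} (h : RewStar R s s') :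
    RewStar R (XTerm.node σ (Function.update f i s)) (XTerm.node σ (Function.update f i s')) :=
  Relation.ReflTransGen.lift (fun x => XTerm.node σ (Function.update f i x))
    (fun _ _ hxy => Rew.node i (by simpa using hxy)
      (fun _ hj => by simp [Function.update_of_ne hj])) _ _ h

theorem rewStar_node {f g : Fin (ar σ) → XTerm S ar C} (hfg : ∀ i, RewStar R (f i) (g i)) :
    RewStar R (XTerm.node σ f) (XTerm.node σ g) := by
  classical
  suffices ∀ s : Finset (Fin (ar σ)),
      RewStar R (XTerm.node σ f) (XTerm.node σ (fun j => if j ∈ s then g j else f j)) by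
    simpa using this Finset.univ
  intro s
  induction s using Finset.induction_on with
  | empty => exact Relation.ReflTransGen.refl
  | @insert i s hi ih =>
    set fs := fun j => if j ∈ s then g j else f j
    have hfi : fs = Function.update fs i (f i) := by simp [fs, hi]
    have hgi : (fun j => if j ∈ insert i s then g j else f j) = Function.update fs i (g i) := by
      ext j
      by_cases hji : j = i <;> simp [fs, hji]
    rw [hgi]
    rw [hfi] at ih
    exact ih.trans (rewStar_node_update fs i (hfg i))

end Congruence

section Realization

variable {S : Type} {ar : S → ℕ} {G : Set (GTerm S ar × GTerm S ar)} {W : Set (GTerm S ar)}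

def SubtermClosed (W : Set (GTerm S ar)) : Prop :=
  ∀ ⦃σ : S⦄ ⦃ts : Fin (ar σ) → GTerm S ar⦄, GTerm.node σ ts ∈ W → ∀ i, ts i ∈ W

theorem Subterm.trans {s t u : GTerm S ar} (hst : Subterm s t) (htu : Subterm t u) :
    Subterm s u := by
  induction htu with
  | refl => exact hst
  | node i _ ih => exact .node i ih

theorem subtermClosed_STSet (E : Set (GTerm S ar × GTerm S ar)) : SubtermClosed (STSet E) := by
  rintro σ ts ⟨p, hp, hsub⟩ i
  have hi : Subterm (ts i) (GTerm.node σ ts) := .node i (.refl _)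
  exact ⟨p, hp, hsub.imp hi.trans hi.trans⟩

theorem rewStar_toX_thCls (hW : SubtermClosed W) {t : GTerm S ar} (ht : t ∈ W) :
    RewStar (RRsys G W) t.toX (XTerm.const (thCls G W t)) := by
  induction t with
  | node σ ts ih =>
    have hargs : RewStar (RRsys G W) (GTerm.node σ ts).toX
        (XTerm.node σ (fun i => XTerm.const (thCls G W (ts i)))) :=
      rewStar_node fun i => ih i (hW ht i)
    exact hargs.tail (.rule ⟨σ, ts, ht, rfl⟩)

theorem exists_of_rule_mem_RRsys {σ : S} {av : Fin (ar σ) → Set (GTerm S ar)}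
    {a : Set (GTerm S ar)}
    (h : (XTerm.node σ (fun j => XTerm.const (av j)), XTerm.const a) ∈ RRsys G W) :
    ∃ ts : Fin (ar σ) → GTerm S ar, GTerm.node σ ts ∈ W ∧ ∀ j, av j = thCls G W (ts j) := by
  obtain ⟨τ, ts, hts, heq⟩ := h
  simp only [Prod.mk.injEq, XTerm.node.injEq] at heq
  obtain ⟨⟨rfl, hav⟩, -⟩ := heq
  refine ⟨ts, hts, fun j => ?_⟩
  injection congrFun (eq_of_heq hav) j

theorem exists_rewStar_of_auxArc (hW : SubtermClosed W) {a c : Set (GTerm S ar)}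
    (harc : AuxArc (RRsys G W) a c) {t : XTerm S ar (Set (GTerm S ar))}
    (ht : RewStar (RRsys G W) t (XTerm.const c)) :
    ∃ (σ : S) (f : Fin (ar σ) → XTerm S ar (Set (GTerm S ar))) (i : Fin (ar σ)),
      f i = t ∧ (∀ j, j ≠ i → IsGroundX (f j)) ∧
        RewStar (RRsys G W) (XTerm.node σ f) (XTerm.const a) := by
  classical
  obtain ⟨σ, av, i, hmem, rfl⟩ := harc
  obtain ⟨ts, hts, hav⟩ := exists_of_rule_mem_RRsys hmem
  refine ⟨σ, Function.update (fun j => (ts j).toX) i t, i, by simp,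
    fun j hj => ⟨ts j, by simp [hj]⟩, .tail (rewStar_node fun j => ?_) (.rule hmem)⟩
  by_cases hji : j = i
  · subst hji
    simpa using ht
  · simpa [hji, hav j] using rewStar_toX_thCls hW (hW hts j)

theorem reachesPE_of_transGen_auxArc (hW : SubtermClosed W) {a b : Set (GTerm S ar)}
    (h : Relation.TransGen (AuxArc (RRsys G W)) a b) : ReachesPE (RRsys G W) a b := by
  induction h using Relation.TransGen.head_induction_on with
  | single harc =>
    obtain ⟨σ, f, i, hfi, hground, hrew⟩ := exists_rewStar_of_auxArc hW harc .refl
    exact ⟨_, .base i hfi hground, hrew⟩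
  | head harc _ ih =>
    obtain ⟨t, hext, ht⟩ := ih
    obtain ⟨σ, f, i, rfl, hground, hrew⟩ := exists_rewStar_of_auxArc hW harc ht
    exact ⟨_, .step i hext hground, hrew⟩

theorem reachesPE_RRsys_iff_transGen_auxArc (hW : SubtermClosed W) {a b : Set (GTerm S ar)} :
    ReachesPE (RRsys G W) a b ↔ Relation.TransGen (AuxArc (RRsys G W)) a b :=
  ⟨(flatRules_RRsys G W).transGen_auxArc_of_reachesPE, reachesPE_of_transGen_auxArc hW⟩

end Realization

theorem stmt_19_general {S : Type} {ar : S → ℕ}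
    (E F : Set (GTerm S ar × GTerm S ar)) :
    TogetherSim E F ↔
    ∀ a ∈ CCl (E ∪ F) (STSet (E ∪ F)),
      (a ∈ CCl E (STSet (E ∪ F)) ∧
        ∀ b ∈ CCl (E ∪ F) (STSet (E ∪ F)),
          Relation.TransGen (AuxArc (RRsys (E ∪ F) (STSet (E ∪ F)))) a b →
          KeepsUp (RRsys E (STSet (E ∪ F))) (RRsys (E ∪ F) (STSet (E ∪ F)))
            (CCl E (STSet (E ∪ F))) b) ∨
      (a ∈ CCl F (STSet (E ∪ F)) ∧
        ∀ b ∈ CCl (E ∪ F) (STSet (E ∪ F)),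
          Relation.TransGen (AuxArc (RRsys (E ∪ F) (STSet (E ∪ F)))) a b →
          KeepsUp (RRsys F (STSet (E ∪ F))) (RRsys (E ∪ F) (STSet (E ∪ F)))
            (CCl F (STSet (E ∪ F))) b) := by
  simp only [TogetherSim, SimulatesOn,
    reachesPE_RRsys_iff_transGen_auxArc (subtermClosed_STSet (E ∪ F))]

theorem stmt_19 {S : Type} [Fintype S] {ar : S → ℕ} (hconst : ∃ c : S, ar c = 0)
    (E F : Set (GTerm S ar × GTerm S ar)) (hEfin : E.Finite) (hFfin : F.Finite) :
    TogetherSim E F ↔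
    ∀ a ∈ CCl (E ∪ F) (STSet (E ∪ F)),
      (a ∈ CCl E (STSet (E ∪ F)) ∧
        ∀ b ∈ CCl (E ∪ F) (STSet (E ∪ F)),
          Relation.TransGen (AuxArc (RRsys (E ∪ F) (STSet (E ∪ F)))) a b →
          KeepsUp (RRsys E (STSet (E ∪ F))) (RRsys (E ∪ F) (STSet (E ∪ F)))
            (CCl E (STSet (E ∪ F))) b) ∨
      (a ∈ CCl F (STSet (E ∪ F)) ∧
        ∀ b ∈ CCl (E ∪ F) (STSet (E ∪ F)),
          Relation.TransGen (AuxArc (RRsys (E ∪ F) (STSet (E ∪ F)))) a b →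
          KeepsUp (RRsys F (STSet (E ∪ F))) (RRsys (E ∪ F) (STSet (E ∪ F)))
            (CCl F (STSet (E ∪ F))) b) :=
  stmt_19_general E F
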